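/- arXiv:2509.24747 — 2 statements merged into one kernel-verified Lean document; each statement's English description precedes it below -/
import Mathlib

section
/- For a threshold utility v ∈ 𝒰(ℝ), the following statements are equivalent: (a) for all X, Y ∈ 𝒳 and all m ∈ ℝ, X ≤_{v-SD} Y implies X + m ≤_{v-SD} Y + m; (b) for every Z ∈ 𝒳, the base risk measure ρ_{Z,v} is v-SD-consistent; (c) the absolute risk aversion R_v^A is constant on ℝ. -/
open MeasureTheory Filter Set

noncomputable section

namespace Paper

variable {Ω : Type*} [MeasurableSpace Ω]

/-- The probability measure `P` is atomless. -/
def Atomless (P : Measure Ω) : Prop :=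
  ∀ s : Set Ω, MeasurableSet s → 0 < P s →
    ∃ t : Set Ω, MeasurableSet t ∧ t ⊆ s ∧ 0 < P t ∧ P t < P s

/-- `𝒳`: the essentially bounded random variables. -/
def MemX (P : Measure Ω) (X : Ω → ℝ) : Prop :=
  Measurable X ∧ ∃ C : ℝ, ∀ᵐ ω ∂P, |X ω| ≤ C

/-- `𝒰(I)`: twice differentiable functions with everywhere positive first
derivative on `I`. -/
def IsUtility (I : Set ℝ) (u : ℝ → ℝ) : Prop :=
  (∀ x ∈ I, DifferentiableAt ℝ u x) ∧
  (∀ x ∈ I, DifferentiableAt ℝ (deriv u) x) ∧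
  (∀ x ∈ I, 0 < deriv u x)

/-- Arrow–Pratt coefficient of absolute risk aversion. -/
def RA (u : ℝ → ℝ) (x : ℝ) : ℝ := -deriv (deriv u) x / deriv u x

/-- `𝓛¹_v`: `I`-valued random variables `X` with `v(X)` integrable. -/
def MemL1 (P : Measure Ω) (I : Set ℝ) (v : ℝ → ℝ) (X : Ω → ℝ) : Prop :=
  Measurable X ∧ (∀ᵐ ω ∂P, X ω ∈ I) ∧ Integrable (fun ω => v (X ω)) P

/-- The `v`-SD order: `X ≤_{v-SD} Y`. -/
def vSD (P : Measure Ω) (I : Set ℝ) (v : ℝ → ℝ) (X Y : Ω → ℝ) : Prop :=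
  ∀ u : ℝ → ℝ, IsUtility I u → (∀ x ∈ I, RA v x ≤ RA u x) →
    Integrable (fun ω => u (X ω)) P → Integrable (fun ω => u (Y ω)) P →
    ∫ ω, u (X ω) ∂P ≤ ∫ ω, u (Y ω) ∂P

/-- Second-order stochastic dominance. -/
def SSD (P : Measure Ω) (X Y : Ω → ℝ) : Prop :=
  ∀ u : ℝ → ℝ, IsUtility Set.univ u → ConcaveOn ℝ Set.univ u →
    Integrable (fun ω => u (X ω)) P → Integrable (fun ω => u (Y ω)) P →
    ∫ ω, u (X ω) ∂P ≤ ∫ ω, u (Y ω) ∂P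

/-- Monetary risk measure: antitone and cash-additive on `𝒳`. -/
def IsRiskMeasure (P : Measure Ω) (ρ : (Ω → ℝ) → ℝ) : Prop :=
  (∀ X Y : Ω → ℝ, MemX P X → MemX P Y → (∀ᵐ ω ∂P, X ω ≤ Y ω) → ρ Y ≤ ρ X) ∧
  (∀ X : Ω → ℝ, MemX P X → ∀ c : ℝ, ρ (fun ω => X ω + c) = ρ X - c)

/-- Worst-case risk measure `ρ^w(X) = ess sup (-X)`. -/
def rhoW (P : Measure Ω) (X : Ω → ℝ) : ℝ :=
  sInf {m : ℝ | ∀ᵐ ω ∂P, -X ω ≤ m}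

/-- `v`-SD-consistency of `φ` on the domain `D`. -/
def VSDConsistent (P : Measure Ω) (I : Set ℝ) (v : ℝ → ℝ)
    (D : Set (Ω → ℝ)) (φ : (Ω → ℝ) → ℝ) : Prop :=
  ∀ X Y : Ω → ℝ, X ∈ D → Y ∈ D → MemL1 P I v X → MemL1 P I v Y →
    vSD P I v X Y → φ Y ≤ φ X

/-- `𝒞`: the a.s. strictly positive bounded random variables. -/
def MemC (P : Measure Ω) (X : Ω → ℝ) : Prop :=
  MemX P X ∧ ∀ᵐ ω ∂P, 0 < X ω

/-- `𝓔 = {e^Y : Y ∈ 𝒳}` (up to a.s. equality). -/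
def MemE (P : Measure Ω) (X : Ω → ℝ) : Prop :=
  ∃ Y : Ω → ℝ, MemX P Y ∧ ∀ᵐ ω ∂P, X ω = Real.exp (Y ω)

/-- Return risk measure. -/
def IsRRM (P : Measure Ω) (η : (Ω → ℝ) → ℝ) : Prop :=
  (∀ X : Ω → ℝ, MemC P X → 0 < η X) ∧
  (∀ X Y : Ω → ℝ, MemC P X → MemC P Y → (∀ᵐ ω ∂P, X ω ≤ Y ω) → η Y ≤ η X) ∧
  (∀ X : Ω → ℝ, MemC P X → ∀ t : ℝ, 0 < t → η (fun ω => t * X ω) = t⁻¹ * η X)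

/-- Loss-based return risk measure. -/
def IsLossRRM (P : Measure Ω) (κ : (Ω → ℝ) → ℝ) : Prop :=
  (∀ L : Ω → ℝ, MemC P L → 0 < κ L) ∧
  (∀ L L' : Ω → ℝ, MemC P L → MemC P L' → (∀ᵐ ω ∂P, L' ω ≤ L ω) → κ L' ≤ κ L) ∧
  (∀ L : Ω → ℝ, MemC P L → ∀ t : ℝ, 0 < t → κ (fun ω => t * L ω) = t * κ L)

/-- Base risk measure `ρ_{Z,v}`. -/
def baseRM (P : Measure Ω) (v : ℝ → ℝ) (Z X : Ω → ℝ) : ℝ :=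
  sInf {m : ℝ | vSD P Set.univ v Z (fun ω => X ω + m)}

/-- Lower quantile function. -/
def qf (P : Measure Ω) (X : Ω → ℝ) (r : ℝ) : ℝ :=
  sInf {x : ℝ | r ≤ (P {ω | X ω ≤ x}).toReal}

/-- Expected Shortfall at level `p`. -/
def ES (P : Measure Ω) (p : ℝ) (X : Ω → ℝ) : ℝ :=
  if p < 1 then -(1 / (1 - p)) * ∫ r in (0:ℝ)..(1 - p), qf P X r
  else rhoW P X


/-!
(c) ⇒ (a): when `R_v^A` is constant, translating a utility `u ∈ 𝒰_v` by `m` keeps it in `𝒰_v`.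
(a) ⇒ (b): translation invariance makes `{m | Z ≤_{v-SD} X + m}` grow with `X` in the `v`-SD order.
(b) ⇒ (c): an event of probability `λ ∈ (0, 1)` carries a two-point lottery `X = a, b` that is
`v`-SD dominated by its `v`-certainty equivalent `c`; consistency of `ρ_{X+m,v}` forces the
certainty equivalent of `X + m` to be at most `c + m`, with equality at `m = 0`. Differentiating
in `m` shows that `v'(c) = λ v'(a) + (1 - λ) v'(b)` whenever `v(c) = λ v(a) + (1 - λ) v(b)`, and a
maximum principle shows that a continuous function with this property is affine in `v`. So
`v' = α v + β`, hence `v'' = α v'` and `R_v^A ≡ -α`.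
-/

section Utility

variable {u v : ℝ → ℝ}

theorem IsUtility.differentiableAt (hu : IsUtility univ u) (x : ℝ) : DifferentiableAt ℝ u x :=
  hu.1 x trivial

theorem IsUtility.differentiableAt_deriv (hu : IsUtility univ u) (x : ℝ) :
    DifferentiableAt ℝ (deriv u) x :=
  hu.2.1 x trivial

theorem IsUtility.deriv_pos (hu : IsUtility univ u) (x : ℝ) : 0 < deriv u x :=
  hu.2.2 x trivial

theorem IsUtility.continuous (hu : IsUtility univ u) : Continuous u :=
  continuous_iff_continuousAt.2 fun x => (hu.differentiableAt x).continuousAt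

theorem IsUtility.continuous_deriv (hu : IsUtility univ u) : Continuous (deriv u) :=
  continuous_iff_continuousAt.2 fun x => (hu.differentiableAt_deriv x).continuousAt

theorem IsUtility.strictMono (hu : IsUtility univ u) : StrictMono u :=
  strictMono_of_deriv_pos hu.deriv_pos

theorem IsUtility.comp_add_const (hu : IsUtility univ u) (m : ℝ) :
    IsUtility univ (fun x => u (x + m)) := by
  have hd : deriv (fun x => u (x + m)) = fun x => deriv u (x + m) :=
    funext (deriv_comp_add_const u m)
  refine ⟨fun x _ => ?_, fun x _ => ?_, fun x _ => ?_⟩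
  · exact (hu.differentiableAt (x + m)).comp x (differentiableAt_id.add_const m)
  · rw [hd]
    exact (hu.differentiableAt_deriv (x + m)).comp x (differentiableAt_id.add_const m)
  · rw [hd]
    exact hu.deriv_pos (x + m)

theorem RA_comp_add_const (u : ℝ → ℝ) (m x : ℝ) :
    RA (fun y => u (y + m)) x = RA u (x + m) := by
  have hd : deriv (fun y => u (y + m)) = fun y => deriv u (y + m) :=
    funext (deriv_comp_add_const u m)
  rw [RA, RA, hd, deriv_comp_add_const]

theorem antitone_deriv_div_deriv_of_RA_le (hu : IsUtility univ u) (hv : IsUtility univ v)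
    (hR : ∀ x, RA v x ≤ RA u x) : Antitone fun x => deriv u x / deriv v x := by
  refine antitone_of_deriv_nonpos (fun x => (hu.differentiableAt_deriv x).div
    (hv.differentiableAt_deriv x) (hv.deriv_pos x).ne') fun x => ?_
  rw [deriv_fun_div (hu.differentiableAt_deriv x) (hv.differentiableAt_deriv x)
    (hv.deriv_pos x).ne']
  have h := hR x
  rw [RA, RA, div_le_div_iff₀ (hv.deriv_pos x) (hu.deriv_pos x)] at h
  exact div_nonpos_of_nonpos_of_nonneg (by linarith) (sq_nonneg _)

/-- `u - r v` with `r = u'(c)/v'(c)` has derivative `v' (u'/v' - r)`, which changes sign from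
`+` to `-` at `c` because `u'/v'` is antitone. -/
theorem sub_le_deriv_div_deriv_mul_sub (hu : IsUtility univ u) (hv : IsUtility univ v)
    (hR : ∀ x, RA v x ≤ RA u x) (c x : ℝ) :
    u x - u c ≤ deriv u c / deriv v c * (v x - v c) := by
  set r := deriv u c / deriv v c
  set g := fun y => u y - r * v y
  have hg : ∀ y, HasDerivAt g (deriv u y - r * deriv v y) y := fun y =>
    (hu.differentiableAt y).hasDerivAt.sub ((hv.differentiableAt y).hasDerivAt.const_mul r)
  have hgc : Continuous g := hu.continuous.sub (continuous_const.mul hv.continuous)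
  have hanti := antitone_deriv_div_deriv_of_RA_le hu hv hR
  suffices g x ≤ g c by simp only [g] at this; linarith
  rcases le_total x c with hxc | hcx
  · refine monotoneOn_of_hasDerivWithinAt_nonneg (convex_Iic c) hgc.continuousOn
      (fun y _ => (hg y).hasDerivWithinAt) (fun y hy => ?_) hxc (mem_Iic.2 le_rfl) hxc
    rw [interior_Iic] at hy
    have := hanti hy.le
    rw [le_div_iff₀ (hv.deriv_pos y)] at this
    linarith
  · refine antitoneOn_of_hasDerivWithinAt_nonpos (convex_Ici c) hgc.continuousOn
      (fun y _ => (hg y).hasDerivWithinAt) (fun y hy => ?_) (mem_Ici.2 le_rfl) hcx hcx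
    rw [interior_Ici] at hy
    have := hanti hy.le
    rw [div_le_iff₀ (hv.deriv_pos y)] at this
    linarith

theorem combo_le_of_RA_le (hu : IsUtility univ u) (hv : IsUtility univ v)
    (hR : ∀ x, RA v x ≤ RA u x) {lam a b c : ℝ} (h0 : 0 ≤ lam) (h1 : lam ≤ 1)
    (hc : lam * v a + (1 - lam) * v b ≤ v c) :
    lam * u a + (1 - lam) * u b ≤ u c := by
  have ha := mul_le_mul_of_nonneg_left (sub_le_deriv_div_deriv_mul_sub hu hv hR c a) h0
  have hb := mul_le_mul_of_nonneg_left (sub_le_deriv_div_deriv_mul_sub hu hv hR c b)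
    (sub_nonneg.2 h1)
  have hr := mul_le_mul_of_nonneg_left (sub_nonpos.2 hc)
    (div_pos (hu.deriv_pos c) (hv.deriv_pos c)).le
  linarith

end Utility

section AffineAlong

def IsAffineAlong (v w : ℝ → ℝ) (lam : ℝ) : Prop :=
  ∀ a b c, v c = lam * v a + (1 - lam) * v b → w c = lam * w a + (1 - lam) * w b

variable {v w : ℝ → ℝ} {lam : ℝ}

/-- The least maximiser of `w` on `[p, q]` cannot be interior: it is a `lam`-mixture along `v`
of a strictly smaller point and a larger one, and the smaller point would be a maximiser too. -/
theorem le_max_of_le_combo_along (hv : Continuous v) (hvm : StrictMono v) (hw : Continuous w)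
    (h0 : 0 < lam) (h1 : lam < 1)
    (hconv : ∀ a b c, v c = lam * v a + (1 - lam) * v b → w c ≤ lam * w a + (1 - lam) * w b)
    {p q x : ℝ} (hx : x ∈ Icc p q) : w x ≤ max (w p) (w q) := by
  have hpq : p ≤ q := hx.1.trans hx.2
  obtain ⟨x₀, hx₀, hmax⟩ := isCompact_Icc.exists_isMaxOn (nonempty_Icc.2 hpq) hw.continuousOn
  set K := Icc p q ∩ w ⁻¹' {w x₀}
  have hKbdd : BddBelow K := ⟨p, fun y hy => hy.1.1⟩
  have hx₁ : sInf K ∈ K :=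
    (isClosed_Icc.inter (isClosed_singleton.preimage hw)).csInf_mem ⟨x₀, hx₀, rfl⟩ hKbdd
  set x₁ := sInf K
  obtain ⟨⟨hpx₁, hx₁q⟩, hwx₁ : w x₁ = w x₀⟩ := hx₁
  suffices hend : x₁ = p ∨ x₁ = q by
    calc w x ≤ w x₀ := hmax hx
      _ = w x₁ := hwx₁.symm
      _ ≤ max (w p) (w q) := by
        rcases hend with h | h <;> rw [h]
        exacts [le_max_left _ _, le_max_right _ _]
  by_contra! hne
  have hlo : v p < v x₁ := hvm (lt_of_le_of_ne hpx₁ (Ne.symm hne.1))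
  have hhi : v x₁ < v q := hvm (lt_of_le_of_ne hx₁q hne.2)
  set δ := min (v x₁ - v p) (v q - v x₁)
  have hδ : 0 < δ := lt_min (by linarith) (by linarith)
  have hδlo : δ ≤ v x₁ - v p := min_le_left _ _
  have hδhi : δ ≤ v q - v x₁ := min_le_right _ _
  obtain ⟨a, ⟨hpa, -⟩, ha⟩ := intermediate_value_Icc hpx₁ hv.continuousOn
    (show v x₁ - (1 - lam) * δ ∈ Icc (v p) (v x₁) by constructor <;> nlinarith)
  obtain ⟨b, ⟨-, hbq⟩, hb⟩ := intermediate_value_Icc hx₁q hv.continuousOn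
    (show v x₁ + lam * δ ∈ Icc (v x₁) (v q) by constructor <;> nlinarith)
  have hax₁ : a < x₁ := hvm.lt_iff_lt.1 (by rw [ha]; nlinarith)
  have hx₁b : x₁ ≤ b := hvm.le_iff_le.1 (by rw [hb]; nlinarith)
  have haI : a ∈ Icc p q := ⟨hpa, hax₁.le.trans hx₁q⟩
  have hwb : w b ≤ w x₀ := hmax ⟨hpx₁.trans hx₁b, hbq⟩
  have hcomb : w x₁ ≤ lam * w a + (1 - lam) * w b := hconv a b x₁ (by rw [ha, hb]; ring)
  have hwa : w a = w x₀ := le_antisymm (hmax haI) (by nlinarith)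
  exact (csInf_le hKbdd ⟨haI, hwa⟩).not_gt hax₁

theorem IsAffineAlong.eq_zero_on_Icc (hv : Continuous v) (hvm : StrictMono v)
    (hw : Continuous w) (h0 : 0 < lam) (h1 : lam < 1) (haff : IsAffineAlong v w lam)
    {p q : ℝ} (hp : w p = 0) (hq : w q = 0) {x : ℝ} (hx : x ∈ Icc p q) : w x = 0 := by
  have hle := le_max_of_le_combo_along hv hvm hw h0 h1 (fun a b c hc => (haff a b c hc).le) hx
  have hge := le_max_of_le_combo_along (w := fun y => -w y) hv hvm hw.neg h0 h1
    (fun a b c hc => by rw [haff a b c hc]; linarith) hx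
  simp only [hp, hq, max_self, neg_zero] at hle hge
  linarith

theorem IsAffineAlong.eq_chord (hv : Continuous v) (hvm : StrictMono v) (hw : Continuous w)
    (h0 : 0 < lam) (h1 : lam < 1) (haff : IsAffineAlong v w lam) {p q : ℝ} (hpq : p < q)
    {x : ℝ} (hx : x ∈ Icc p q) :
    w x = w p + (w q - w p) / (v q - v p) * (v x - v p) := by
  have hvpq : v q - v p ≠ 0 := sub_ne_zero.2 (hvm hpq).ne'
  set k := (w q - w p) / (v q - v p)
  have hk : k * (v q - v p) = w q - w p := div_mul_cancel₀ _ hvpq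
  have hzero := IsAffineAlong.eq_zero_on_Icc (w := fun y => w y - (w p + k * (v y - v p))) hv hvm
    (hw.sub (continuous_const.add (continuous_const.mul (hv.sub continuous_const)))) h0 h1
    (fun a b c hc => by simp only; rw [haff a b c hc, hc]; ring) (by ring) (by linarith) hx
  linarith

theorem IsAffineAlong.exists_eq_mul_add (hv : Continuous v) (hvm : StrictMono v)
    (hw : Continuous w) (h0 : 0 < lam) (h1 : lam < 1) (haff : IsAffineAlong v w lam) :
    ∃ α β : ℝ, ∀ x, w x = α * v x + β := by
  have hv01 : v 1 - v 0 ≠ 0 := sub_ne_zero.2 (hvm one_pos).ne'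
  refine ⟨(w 1 - w 0) / (v 1 - v 0), w 0 - (w 1 - w 0) / (v 1 - v 0) * v 0, fun x => ?_⟩
  have hpq : min x 0 < max x 1 := (min_le_right x 0).trans_lt (zero_lt_one.trans_le
    (le_max_right x 1))
  have chord := fun y (hy : y ∈ Icc (min x 0) (max x 1)) => haff.eq_chord hv hvm hw h0 h1 hpq hy
  set k := (w (max x 1) - w (min x 0)) / (v (max x 1) - v (min x 0))
  have h0' := chord 0 ⟨min_le_right _ _, zero_le_one.trans (le_max_right _ _)⟩
  have h1' := chord 1 ⟨(min_le_right _ _).trans zero_le_one, le_max_right _ _⟩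
  have hx' := chord x ⟨min_le_left _ _, le_max_left _ _⟩
  have hk : (w 1 - w 0) / (v 1 - v 0) = k := by
    rw [div_eq_iff hv01]
    linarith
  rw [hk]
  linarith

end AffineAlong

section CertaintyEquivalent

variable {v : ℝ → ℝ} {lam : ℝ}

/-- The defect `v(c + m) - (λ v(a + m) + (1 - λ) v(b + m))` has a minimum at `m = 0`. -/
theorem deriv_combo_of_combo_add_le (hv : IsUtility univ v) {a b c : ℝ}
    (hc : v c = lam * v a + (1 - lam) * v b)
    (H : ∀ m, lam * v (a + m) + (1 - lam) * v (b + m) ≤ v (c + m)) :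
    deriv v c = lam * deriv v a + (1 - lam) * deriv v b := by
  have hd : ∀ x, HasDerivAt (fun m => v (x + m)) (deriv v x) 0 := fun x =>
    HasDerivAt.comp_const_add x 0 (by simpa using (hv.differentiableAt x).hasDerivAt)
  have hF := (hd c).sub (((hd a).const_mul lam).add ((hd b).const_mul (1 - lam)))
  have hmin : IsLocalMin (fun m => v (c + m) - (lam * v (a + m) + (1 - lam) * v (b + m))) 0 :=
    Filter.Eventually.of_forall fun m => by simp only [add_zero, hc, sub_self]; linarith [H m]
  linarith [hmin.hasDerivAt_eq_zero hF]

theorem exists_RA_eq_of_combo_add_le (hv : IsUtility univ v) (h0 : 0 < lam) (h1 : lam < 1)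
    (H : ∀ a b c m, v c = lam * v a + (1 - lam) * v b →
      lam * v (a + m) + (1 - lam) * v (b + m) ≤ v (c + m)) :
    ∃ k : ℝ, ∀ x, RA v x = k := by
  have haff : IsAffineAlong v (deriv v) lam := fun a b c hc =>
    deriv_combo_of_combo_add_le hv hc (fun m => H a b c m hc)
  obtain ⟨α, β, hαβ⟩ := haff.exists_eq_mul_add hv.continuous hv.strictMono hv.continuous_deriv h0 h1
  refine ⟨-α, fun x => ?_⟩
  have hd2 : deriv (deriv v) x = α * deriv v x :=
    calc deriv (deriv v) x = deriv (fun y => α * v y + β) x := by rw [funext hαβ]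
      _ = α * deriv v x := (((hv.differentiableAt x).hasDerivAt.const_mul α).add_const β).deriv
  rw [RA, hd2]
  field_simp [(hv.deriv_pos x).ne']

end CertaintyEquivalent

section RandomVariables

variable {P : Measure Ω} {u v : ℝ → ℝ} {X Y Z : Ω → ℝ}

theorem Atomless.exists_measureReal_pos_lt_one [IsProbabilityMeasure P] (hP : Atomless P) :
    ∃ t, MeasurableSet t ∧ 0 < P.real t ∧ P.real t < 1 := by
  obtain ⟨t, ht, -, hpos, hlt⟩ := hP univ MeasurableSet.univ (by simp)
  rw [measure_univ] at hlt
  refine ⟨t, ht, ENNReal.toReal_pos hpos.ne' (measure_ne_top P t), ?_⟩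
  simpa [measureReal_def] using (ENNReal.toReal_lt_toReal (measure_ne_top P t) ENNReal.one_ne_top).2 hlt

theorem MemX.add_const (hX : MemX P X) (m : ℝ) : MemX P (fun ω => X ω + m) := by
  obtain ⟨C, hC⟩ := hX.2
  refine ⟨hX.1.add_const m, C + |m|, ?_⟩
  filter_upwards [hC] with ω hω
  exact (abs_add_le _ _).trans (by linarith)

theorem MemX.integrable_comp [IsFiniteMeasure P] (hX : MemX P X) (hu : Continuous u) :
    Integrable (fun ω => u (X ω)) P := by
  obtain ⟨C, hC⟩ := hX.2
  obtain ⟨M, hM⟩ := (isCompact_Icc (a := -C) (b := C)).exists_bound_of_continuousOn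
    hu.continuousOn
  refine Integrable.of_bound (hu.measurable.comp hX.1).aestronglyMeasurable M ?_
  filter_upwards [hC] with ω hω
  exact hM _ (abs_le.1 hω)

theorem MemX.memL1 [IsFiniteMeasure P] (hX : MemX P X) (hv : Continuous v) :
    MemL1 P univ v X :=
  ⟨hX.1, ae_of_all _ fun _ => trivial, hX.integrable_comp hv⟩

theorem memX_piecewise_const {t : Set Ω} [DecidablePred (· ∈ t)] (ht : MeasurableSet t)
    (a b : ℝ) : MemX P (t.piecewise (fun _ => a) (fun _ => b)) := by
  refine ⟨measurable_const.piecewise ht measurable_const, max |a| |b|, ae_of_all _ fun ω => ?_⟩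
  by_cases hω : ω ∈ t <;> simp [hω]

theorem integral_piecewise_const [IsProbabilityMeasure P] {t : Set Ω} [DecidablePred (· ∈ t)]
    (ht : MeasurableSet t) (a b : ℝ) (u : ℝ → ℝ) :
    ∫ ω, u (t.piecewise (fun _ => a) (fun _ => b) ω) ∂P
      = P.real t * u a + (1 - P.real t) * u b := by
  have hcomp : (fun ω => u (t.piecewise (fun _ => a) (fun _ => b) ω))
      = t.piecewise (fun _ => u a) (fun _ => u b) :=
    funext fun ω => apply_piecewise t _ _ (fun _ => u)
  rw [hcomp, integral_piecewise ht (integrableOn_const) (integrableOn_const), setIntegral_const,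
    setIntegral_const, probReal_compl_eq_one_sub ht, smul_eq_mul, smul_eq_mul]

theorem vSD_of_ae_le (h : ∀ᵐ ω ∂P, X ω ≤ Y ω) : vSD P univ v X Y := fun _ hu _ hX hY =>
  integral_mono_ae hX hY (h.mono fun _ hω => hu.strictMono.monotone hω)

theorem vSD.trans_memX [IsFiniteMeasure P] (hXY : vSD P univ v X Y) (hYZ : vSD P univ v Y Z)
    (hY : MemX P Y) : vSD P univ v X Z := fun u hu hR hX hZ =>
  (hXY u hu hR hX (hY.integrable_comp hu.continuous)).trans
    (hYZ u hu hR (hY.integrable_comp hu.continuous) hZ)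

theorem vSD_piecewise_const [IsProbabilityMeasure P] (hv : IsUtility univ v) {t : Set Ω}
    [DecidablePred (· ∈ t)] (ht : MeasurableSet t) {a b c : ℝ}
    (hc : v c = P.real t * v a + (1 - P.real t) * v b) :
    vSD P univ v (t.piecewise (fun _ => a) (fun _ => b)) (fun _ => c) := by
  intro u hu hR _ _
  rw [integral_piecewise_const ht, integral_const, probReal_univ, one_smul]
  exact combo_le_of_RA_le hu hv (fun x => hR x trivial) measureReal_nonneg measureReal_le_one
    hc.ge

end RandomVariables

section BaseRiskMeasure

variable {P : Measure Ω} {v : ℝ → ℝ} {X Y Z : Ω → ℝ}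

theorem baseRM_set_nonempty (hZ : MemX P Z) (hX : MemX P X) :
    {m : ℝ | vSD P univ v Z (fun ω => X ω + m)}.Nonempty := by
  obtain ⟨CZ, hCZ⟩ := hZ.2
  obtain ⟨CX, hCX⟩ := hX.2
  refine ⟨CZ + CX, vSD_of_ae_le ?_⟩
  filter_upwards [hCZ, hCX] with ω hZω hXω
  linarith [(abs_le.1 hZω).2, (abs_le.1 hXω).1]

theorem baseRM_set_bddBelow [IsProbabilityMeasure P] (hv : IsUtility univ v) (hZ : MemX P Z)
    (hX : MemX P X) : BddBelow {m : ℝ | vSD P univ v Z (fun ω => X ω + m)} := by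
  obtain ⟨CZ, hCZ⟩ := hZ.2
  obtain ⟨CX, hCX⟩ := hX.2
  refine ⟨-CZ - CX, fun m hm => ?_⟩
  have hiZ := hZ.integrable_comp hv.continuous
  have hiXm := (hX.add_const m).integrable_comp hv.continuous
  have hlo : v (-CZ) ≤ ∫ ω, v (Z ω) ∂P := by
    simpa using integral_mono_ae (integrable_const (v (-CZ))) hiZ
      (hCZ.mono fun ω h => hv.strictMono.monotone (abs_le.1 h).1)
  have hhi : ∫ ω, v (X ω + m) ∂P ≤ v (CX + m) := by
    simpa using integral_mono_ae hiXm (integrable_const (v (CX + m)))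
      (hCX.mono fun ω h => hv.strictMono.monotone (by linarith [(abs_le.1 h).2]))
  have := hv.strictMono.le_iff_le.1 ((hlo.trans (hm v hv (fun _ _ => le_rfl) hiZ hiXm)).trans hhi)
  linarith

/-- The constraint `E[v(Z)] ≤ v(c + m)` is closed in `m`, so it survives passing to the infimum. -/
theorem integral_comp_le_comp_add_baseRM_const [IsProbabilityMeasure P] (hv : IsUtility univ v)
    (hZ : MemX P Z) (c : ℝ) : ∫ ω, v (Z ω) ∂P ≤ v (c + baseRM P v Z (fun _ => c)) := by
  have hc : MemX P (fun _ : Ω => c) := ⟨measurable_const, |c|, ae_of_all _ fun _ => le_rfl⟩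
  have hsub : {m : ℝ | vSD P univ v Z (fun _ => c + m)} ⊆ {m | ∫ ω, v (Z ω) ∂P ≤ v (c + m)} :=
    fun m hm => by
      simpa using hm v hv (fun _ _ => le_rfl) (hZ.integrable_comp hv.continuous)
        (integrable_const _)
  exact closure_minimal hsub
    (isClosed_le continuous_const (hv.continuous.comp (continuous_const.add continuous_id)))
    (csInf_mem_closure (baseRM_set_nonempty hZ hc) (baseRM_set_bddBelow hv hZ hc))

end BaseRiskMeasure

section Equivalences

variable {P : Measure Ω} {v : ℝ → ℝ}

theorem vSD_add_const_of_RA_const (hC : ∃ k : ℝ, ∀ x, RA v x = k) {X Y : Ω → ℝ}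
    (hXY : vSD P univ v X Y) (m : ℝ) :
    vSD P univ v (fun ω => X ω + m) (fun ω => Y ω + m) := by
  obtain ⟨k, hk⟩ := hC
  intro u hu hR hX hY
  refine hXY _ (hu.comp_add_const m) (fun x _ => ?_) hX hY
  rw [RA_comp_add_const, hk, ← hk (x + m)]
  exact hR _ trivial

theorem vSDConsistent_baseRM_of_vSD_add_const [IsProbabilityMeasure P] (hv : IsUtility univ v)
    (hA : ∀ X Y : Ω → ℝ, MemX P X → MemX P Y → ∀ m : ℝ,
      vSD P univ v X Y → vSD P univ v (fun ω => X ω + m) (fun ω => Y ω + m))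
    {Z : Ω → ℝ} (hZ : MemX P Z) : VSDConsistent P univ v {X | MemX P X} (baseRM P v Z) :=
  fun X Y hX hY _ _ hXY =>
    csInf_le_csInf (baseRM_set_bddBelow hv hZ hY) (baseRM_set_nonempty hZ hX) fun m hm =>
      hm.trans_memX (hA X Y hX hY m hXY) (hX.add_const m)

theorem exists_RA_eq_of_vSDConsistent_baseRM [IsProbabilityMeasure P] (hP : Atomless P)
    (hv : IsUtility univ v)
    (hB : ∀ Z : Ω → ℝ, MemX P Z → VSDConsistent P univ v {X | MemX P X} (baseRM P v Z)) :
    ∃ k : ℝ, ∀ x, RA v x = k := by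
  classical
  obtain ⟨t, ht, h0, h1⟩ := hP.exists_measureReal_pos_lt_one
  refine exists_RA_eq_of_combo_add_le hv h0 h1 fun a b c m hc => ?_
  set X := t.piecewise (fun _ => a) (fun _ => b)
  have hX : MemX P X := memX_piecewise_const ht a b
  have hc' : MemX P (fun _ : Ω => c) := ⟨measurable_const, |c|, ae_of_all _ fun _ => le_rfl⟩
  have hZ := hX.add_const m
  have hcons := hB _ hZ X (fun _ => c) hX hc' (hX.memL1 hv.continuous)
    (hc'.memL1 hv.continuous) (vSD_piecewise_const hv ht hc)
  have hρX : baseRM P v (fun ω => X ω + m) X ≤ m :=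
    csInf_le (baseRM_set_bddBelow hv hZ hX) fun _ _ _ _ _ => le_rfl
  calc P.real t * v (a + m) + (1 - P.real t) * v (b + m) = ∫ ω, v (X ω + m) ∂P :=
        (integral_piecewise_const ht a b fun x => v (x + m)).symm
    _ ≤ v (c + baseRM P v (fun ω => X ω + m) (fun _ => c)) :=
        integral_comp_le_comp_add_baseRM_const hv hZ c
    _ ≤ v (c + m) := hv.strictMono.monotone (by linarith)

end Equivalences

/-- For a threshold utility `v ∈ 𝒰(ℝ)` the following are
equivalent: (a) the `v`-SD order is invariant under additive translations on `𝒳`;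
(b) all base risk measures `ρ_{Z,v}`, `Z ∈ 𝒳`, are `v`-SD-consistent;
(c) `R_v^A` is constant. -/
theorem statement11 (P : Measure Ω) [IsProbabilityMeasure P] (hP : Atomless P)
    (v : ℝ → ℝ) (hv : IsUtility Set.univ v) :
    ((∀ X Y : Ω → ℝ, MemX P X → MemX P Y → ∀ m : ℝ,
        vSD P Set.univ v X Y →
          vSD P Set.univ v (fun ω => X ω + m) (fun ω => Y ω + m)) ↔
      (∀ Z : Ω → ℝ, MemX P Z →
        VSDConsistent P Set.univ v {X | MemX P X} (baseRM P v Z))) ∧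
    ((∀ Z : Ω → ℝ, MemX P Z →
        VSDConsistent P Set.univ v {X | MemX P X} (baseRM P v Z)) ↔
      (∃ k : ℝ, ∀ x : ℝ, RA v x = k)) := by
  have hAB := fun hA Z (hZ : MemX P Z) => vSDConsistent_baseRM_of_vSD_add_const hv hA hZ
  have hBC := exists_RA_eq_of_vSDConsistent_baseRM hP hv
  exact ⟨⟨hAB, fun hB _ _ _ _ m hXY => vSD_add_const_of_RA_const (hBC hB) hXY m⟩,
    ⟨hBC, fun hC => hAB fun _ _ _ _ m hXY => vSD_add_const_of_RA_const hC hXY m⟩⟩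

end Paper
end
end

section
/- Let v ∈ 𝒰(I) be a threshold utility satisfying the Inada-type condition liminf_{x↑sup I} v′(x) = 0 or limsup_{x↓inf I} v′(x) = ∞. Then the only positively homogeneous v-Meyer risk measure on 𝒳 is the worst-case risk measure: a positively homogeneous monetary risk measure ρ on 𝒳 is v-SD-consistent if and only if ρ(X) = ρ^w(X) = ess sup(−X) for all X ∈ 𝒳. -/
/-!
Every positively homogeneous monetary risk measure satisfies `ρ ≤ ρ^w`, since it sends the
constant `c` to `-c`. For the converse it suffices that `ρ(1_B) ≥ 0` whenever `ℙ(B) < 1`.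
If instead `ρ(1_B) = -δ < 0`, the Inada condition yields `a < a' < b' < b` in `I` such that
raising the low value from `a` to `a'` gains more `v`-utility (weighted by `ℙ(Bᶜ)`) than lowering
the high value from `b` to `b'` loses (weighted by `ℙ(B)`), while `a' - a < δ (b - b')`. Every
utility `u` more risk averse than `v` has `u' / v'` decreasing, so the same trade-off holds for
`u`, and the two-point variable `(b, a)` on `(B, Bᶜ)` is `v`-SD dominated by `(b', a')`.
Consistency and positive homogeneity then give `a' - a ≥ δ (b - b')`, a contradiction.

Conversely `ρ^w` is `v`-SD-consistent: if `ess inf Y < c < b = ess inf X`, the utility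
`u = log σ (k (v - v b))`, with `σ` the logistic function, is a concave transform of `v`, hence
more risk averse. It is at least `-1` above `b`, and at most `0` and `k (v - v b)` everywhere, so
`𝔼 u(Y) ≤ -k (v b - v c) ℙ(Y < c) < -1 ≤ 𝔼 u(X)` for large `k`.
-/

open MeasureTheory Filter Set

noncomputable section

namespace Paper

variable {Ω : Type*} [MeasurableSpace Ω]

open Topology

def InadaCondition (I : Set ℝ) (v : ℝ → ℝ) : Prop :=
  (∀ ε : ℝ, 0 < ε → ∀ b ∈ I, ∃ x ∈ I, b ≤ x ∧ deriv v x < ε) ∨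
    (∀ M : ℝ, ∀ b ∈ I, ∃ x ∈ I, x ≤ b ∧ M < deriv v x)

def IsPositivelyHomogeneous (P : Measure Ω) (ρ : (Ω → ℝ) → ℝ) : Prop :=
  ∀ X : Ω → ℝ, MemX P X → ∀ t : ℝ, 0 < t → ρ (fun ω => t * X ω) = t * ρ X

section Utility

variable {I : Set ℝ} {u v : ℝ → ℝ}

theorem IsUtility.continuousOn (hv : IsUtility I v) : ContinuousOn v I :=
  fun x hx => (hv.1 x hx).continuousAt.continuousWithinAt

theorem IsUtility.continuousOn_deriv (hv : IsUtility I v) : ContinuousOn (deriv v) I :=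
  fun x hx => (hv.2.1 x hx).continuousAt.continuousWithinAt

theorem IsUtility.strictMonoOn (hI : IsOpen I) (hIc : I.OrdConnected) (hv : IsUtility I v) :
    StrictMonoOn v I :=
  strictMonoOn_of_deriv_pos hIc.convex hv.continuousOn
    (fun x hx => hv.2.2 x (hI.interior_eq ▸ hx))

theorem antitoneOn_deriv_div_deriv (hI : IsOpen I) (hIc : I.OrdConnected)
    (hv : IsUtility I v) (hu : IsUtility I u) (hRA : ∀ x ∈ I, RA v x ≤ RA u x) :
    AntitoneOn (fun x => deriv u x / deriv v x) I := by
  have hder : ∀ x ∈ I, HasDerivAt (fun x => deriv u x / deriv v x)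
      ((deriv (deriv u) x * deriv v x - deriv u x * deriv (deriv v) x) / deriv v x ^ 2) x :=
    fun x hx => (hu.2.1 x hx).hasDerivAt.div (hv.2.1 x hx).hasDerivAt (hv.2.2 x hx).ne'
  refine antitoneOn_of_deriv_nonpos hIc.convex
    (fun x hx => (hder x hx).continuousAt.continuousWithinAt)
    (fun x hx => (hder x (hI.interior_eq ▸ hx)).differentiableAt.differentiableWithinAt)
    (fun x hx => ?_)
  rw [hI.interior_eq] at hx
  have hRAx := hRA x hx
  rw [RA, RA, neg_div, neg_div, neg_le_neg_iff,
    div_le_div_iff₀ (hu.2.2 x hx) (hv.2.2 x hx)] at hRAx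
  rw [(hder x hx).deriv]
  exact div_nonpos_of_nonpos_of_nonneg (by linarith) (sq_nonneg _)

theorem exists_sub_eq_deriv_div_mul_sub (hIc : I.OrdConnected) (hv : IsUtility I v)
    (hu : IsUtility I u) {s t : ℝ} (hs : s ∈ I) (ht : t ∈ I) (hst : s < t) :
    ∃ ξ ∈ Ioo s t, u t - u s = deriv u ξ / deriv v ξ * (v t - v s) := by
  have hsub : Icc s t ⊆ I := hIc.out hs ht
  obtain ⟨ξ, hξ, h⟩ := exists_ratio_deriv_eq_ratio_slope u hst (hu.continuousOn.mono hsub)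
    (fun x hx => (hu.1 x (hsub (Ioo_subset_Icc_self hx))).differentiableWithinAt) v
    (hv.continuousOn.mono hsub)
    (fun x hx => (hv.1 x (hsub (Ioo_subset_Icc_self hx))).differentiableWithinAt)
  refine ⟨ξ, hξ, ?_⟩
  have hvξ := (hv.2.2 ξ (hsub (Ioo_subset_Icc_self hξ))).ne'
  field_simp
  linarith

theorem two_point_utility_le (hI : IsOpen I) (hIc : I.OrdConnected) (hv : IsUtility I v)
    (hu : IsUtility I u) (hRA : ∀ x ∈ I, RA v x ≤ RA u x) {a a' b' b : ℝ}
    (hab : Icc a b ⊆ I) (h₁ : a < a') (h₂ : a' ≤ b') (h₃ : b' < b) {p q : ℝ}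
    (hq : 0 ≤ q) (hpq : p * (v b - v b') ≤ q * (v a' - v a)) :
    p * u b + q * u a ≤ p * u b' + q * u a' := by
  have ha : a ∈ I := hab ⟨le_rfl, by linarith⟩
  have ha' : a' ∈ I := hab ⟨h₁.le, by linarith⟩
  have hb' : b' ∈ I := hab ⟨by linarith, h₃.le⟩
  have hb : b ∈ I := hab ⟨by linarith, le_rfl⟩
  obtain ⟨ξ, hξ, hξeq⟩ := exists_sub_eq_deriv_div_mul_sub hIc hv hu hb' hb h₃
  obtain ⟨ζ, hζ, hζeq⟩ := exists_sub_eq_deriv_div_mul_sub hIc hv hu ha ha' h₁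
  have hξI : ξ ∈ I := hIc.out hb' hb (Ioo_subset_Icc_self hξ)
  have hζI : ζ ∈ I := hIc.out ha ha' (Ioo_subset_Icc_self hζ)
  have hratio : deriv u ξ / deriv v ξ ≤ deriv u ζ / deriv v ζ :=
    antitoneOn_deriv_div_deriv hI hIc hv hu hRA hζI hξI (by linarith [hζ.2, hξ.1])
  have hξpos : 0 ≤ deriv u ξ / deriv v ξ := (div_pos (hu.2.2 ξ hξI) (hv.2.2 ξ hξI)).le
  have hva : 0 ≤ q * (v a' - v a) :=
    mul_nonneg hq (sub_nonneg.2 (hv.strictMonoOn hI hIc ha ha' h₁).le)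
  suffices p * (u b - u b') ≤ q * (u a' - u a) by linarith
  calc p * (u b - u b') = deriv u ξ / deriv v ξ * (p * (v b - v b')) := by rw [hξeq]; ring
    _ ≤ deriv u ξ / deriv v ξ * (q * (v a' - v a)) := mul_le_mul_of_nonneg_left hpq hξpos
    _ ≤ deriv u ζ / deriv v ζ * (q * (v a' - v a)) := mul_le_mul_of_nonneg_right hratio hva
    _ = q * (u a' - u a) := by rw [hζeq]; ring

section Composition

variable {φ φ' φ'' : ℝ → ℝ}

theorem IsUtility.hasDerivAt_comp (hv : IsUtility I v) (hφ : ∀ z, HasDerivAt φ (φ' z) z)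
    {x : ℝ} (hx : x ∈ I) : HasDerivAt (fun y => φ (v y)) (φ' (v x) * deriv v x) x :=
  (hφ (v x)).comp x (hv.1 x hx).hasDerivAt

theorem IsUtility.hasDerivAt_deriv_comp (hI : IsOpen I) (hv : IsUtility I v)
    (hφ : ∀ z, HasDerivAt φ (φ' z) z) (hφ' : ∀ z, HasDerivAt φ' (φ'' z) z) {x : ℝ} (hx : x ∈ I) :
    HasDerivAt (deriv fun y => φ (v y))
      (φ'' (v x) * deriv v x * deriv v x + φ' (v x) * deriv (deriv v) x) x := by
  have hderiv : deriv (fun y => φ (v y)) =ᶠ[𝓝 x] fun y => φ' (v y) * deriv v y := by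
    filter_upwards [hI.mem_nhds hx] with y hy
    exact (hv.hasDerivAt_comp hφ hy).deriv
  exact (((hφ' (v x)).comp x (hv.1 x hx).hasDerivAt).mul
    (hv.2.1 x hx).hasDerivAt).congr_of_eventuallyEq hderiv

theorem IsUtility.comp (hI : IsOpen I) (hv : IsUtility I v)
    (hφ : ∀ z, HasDerivAt φ (φ' z) z) (hφ' : ∀ z, HasDerivAt φ' (φ'' z) z)
    (hφ'_pos : ∀ z, 0 < φ' z) : IsUtility I fun y => φ (v y) := by
  refine ⟨fun x hx => (hv.hasDerivAt_comp hφ hx).differentiableAt,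
    fun x hx => (hv.hasDerivAt_deriv_comp hI hφ hφ' hx).differentiableAt, fun x hx => ?_⟩
  rw [(hv.hasDerivAt_comp hφ hx).deriv]
  exact mul_pos (hφ'_pos _) (hv.2.2 x hx)

theorem IsUtility.RA_le_RA_comp (hI : IsOpen I) (hv : IsUtility I v)
    (hφ : ∀ z, HasDerivAt φ (φ' z) z) (hφ' : ∀ z, HasDerivAt φ' (φ'' z) z)
    (hφ'_pos : ∀ z, 0 < φ' z) (hφ''_nonpos : ∀ z, φ'' z ≤ 0) {x : ℝ} (hx : x ∈ I) :
    RA v x ≤ RA (fun y => φ (v y)) x := by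
  have hvx := hv.2.2 x hx
  have hφx := hφ'_pos (v x)
  have hRA : RA (fun y => φ (v y)) x = -φ'' (v x) * deriv v x / φ' (v x) + RA v x := by
    rw [RA, RA, (hv.hasDerivAt_deriv_comp hI hφ hφ' hx).deriv, (hv.hasDerivAt_comp hφ hx).deriv]
    field_simp
    ring
  rw [hRA, le_add_iff_nonneg_left]
  exact div_nonneg (mul_nonneg (neg_nonneg.2 (hφ''_nonpos _)) hvx.le) hφx.le

end Composition

end Utility

section LogSigmoid

open Real

def logSigmoid (z : ℝ) : ℝ := log (sigmoid z)

theorem logSigmoid_eq (z : ℝ) : logSigmoid z = -log (1 + exp (-z)) := by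
  rw [logSigmoid, sigmoid_def, log_inv]

theorem hasDerivAt_logSigmoid (z : ℝ) : HasDerivAt logSigmoid (1 - sigmoid z) z :=
  ((hasDerivAt_sigmoid z).log (sigmoid_pos z).ne').congr_deriv
    (by field_simp [(sigmoid_pos z).ne'])

theorem continuous_logSigmoid : Continuous logSigmoid :=
  continuous_iff_continuousAt.2 fun z => (hasDerivAt_logSigmoid z).continuousAt

theorem logSigmoid_nonpos (z : ℝ) : logSigmoid z ≤ 0 :=
  log_nonpos (sigmoid_nonneg z) (sigmoid_le_one z)

theorem logSigmoid_le_self (z : ℝ) : logSigmoid z ≤ z := by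
  rw [logSigmoid, log_le_iff_le_exp (sigmoid_pos z), sigmoid_def]
  refine inv_le_of_inv_le₀ (exp_pos z) ?_
  rw [← exp_neg]
  linarith [exp_pos (-z)]

theorem neg_one_le_logSigmoid {z : ℝ} (hz : 0 ≤ z) : -1 ≤ logSigmoid z := by
  have h := one_sub_inv_le_log_of_pos (sigmoid_pos z)
  rw [sigmoid_def, inv_inv] at h
  rw [logSigmoid, sigmoid_def]
  linarith [exp_le_one_iff.2 (neg_nonpos.2 hz)]

theorem abs_logSigmoid_le (z : ℝ) : |logSigmoid z| ≤ |z| + 1 := by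
  rw [abs_of_nonpos (logSigmoid_nonpos z), logSigmoid_eq, neg_neg,
    log_le_iff_le_exp (by positivity), exp_add]
  have he : 2 ≤ exp 1 := by linarith [add_one_le_exp (1 : ℝ)]
  have h1 : 1 ≤ exp |z| := one_le_exp (abs_nonneg z)
  have h2 : exp (-z) ≤ exp |z| := exp_le_exp.2 (neg_le_abs z)
  nlinarith

theorem IsUtility.logSigmoid_comp {I : Set ℝ} {v : ℝ → ℝ} (hI : IsOpen I) (hv : IsUtility I v)
    {k : ℝ} (hk : 0 < k) (c : ℝ) :
    IsUtility I (fun y => logSigmoid (k * (v y - c))) ∧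
      ∀ x ∈ I, RA v x ≤ RA (fun y => logSigmoid (k * (v y - c))) x := by
  set σ := fun z => sigmoid (k * (z - c))
  have hlin : ∀ z, HasDerivAt (fun z => k * (z - c)) k z := fun z => by
    simpa using ((hasDerivAt_id z).sub_const c).const_mul k
  have hφ : ∀ z, HasDerivAt (fun z => logSigmoid (k * (z - c))) ((1 - σ z) * k) z :=
    fun z => (hasDerivAt_logSigmoid _).comp z (hlin z)
  have hφ' : ∀ z, HasDerivAt (fun z => (1 - σ z) * k) (-(σ z * (1 - σ z) * k) * k) z :=
    fun z => (((hasDerivAt_sigmoid _).comp z (hlin z)).const_sub 1).mul_const k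
  have hσ : ∀ z, 0 < σ z ∧ 0 < 1 - σ z := fun z => ⟨sigmoid_pos _, sub_pos.2 (sigmoid_lt_one _)⟩
  have hpos : ∀ z, 0 < (1 - σ z) * k := fun z => mul_pos (hσ z).2 hk
  have hnonpos : ∀ z, -(σ z * (1 - σ z) * k) * k ≤ 0 := fun z => by
    have := mul_pos (mul_pos (mul_pos (hσ z).1 (hσ z).2) hk) hk
    linarith
  exact ⟨hv.comp hI (φ := fun z => logSigmoid (k * (z - c))) hφ hφ' hpos,
    fun x hx => hv.RA_le_RA_comp hI (φ := fun z => logSigmoid (k * (z - c))) hφ hφ' hpos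
      hnonpos hx⟩

end LogSigmoid

section Inada

variable {I : Set ℝ} {v : ℝ → ℝ}

theorem exists_Icc_subset_of_eventually {p : ℝ → Prop} {x : ℝ} (h : ∀ᶠ y in 𝓝 x, p y) :
    ∃ η > 0, ∀ y ∈ Icc x (x + η), p y := by
  obtain ⟨w, hw, hsub⟩ := mem_nhdsGE_iff_exists_Icc_subset.1 (nhdsWithin_le_nhds h)
  exact ⟨w - x, sub_pos.2 hw, fun y hy => hsub (by simpa using hy)⟩

theorem exists_steep_flat_of_inada (hI : IsOpen I) (hIc : I.OrdConnected) (hIne : I.Nonempty)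
    (hv : IsUtility I v) (hInada : InadaCondition I v) {κ : ℝ} (hκ : 0 < κ) :
    ∃ s t η m M : ℝ, 0 < η ∧ s + η ≤ t ∧ Icc s (t + η) ⊆ I ∧ κ * M ≤ m ∧
      (∀ y ∈ Icc s (s + η), m ≤ deriv v y) ∧ (∀ y ∈ Icc t (t + η), deriv v y ≤ M) := by
  obtain ⟨j, hj⟩ := hIne
  obtain ⟨r, hr, hJ⟩ : ∃ r > 0, Icc j (j + r) ⊆ I :=
    exists_Icc_subset_of_eventually (hI.eventually_mem hj)
  have hcont : ContinuousOn (deriv v) (Icc j (j + r)) := hv.continuousOn_deriv.mono hJ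
  have hne : (Icc j (j + r)).Nonempty := nonempty_Icc.2 (by linarith)
  rcases hInada with hsmall | hlarge
  · obtain ⟨y₀, hy₀, hmin⟩ := isCompact_Icc.exists_isMinOn hne hcont
    have hm : 0 < deriv v y₀ := hv.2.2 y₀ (hJ hy₀)
    obtain ⟨x, hx, hjx, hxlt⟩ := hsmall _ (div_pos hm hκ) (j + r) (hJ ⟨by linarith, le_rfl⟩)
    obtain ⟨h, hh, hxh⟩ := exists_Icc_subset_of_eventually
      ((hI.eventually_mem hx).and ((hv.2.1 x hx).continuousAt.eventually (gt_mem_nhds hxlt)))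
    have hηh := min_le_left h r
    have hηr := min_le_right h r
    refine ⟨j, x, min h r, deriv v y₀, deriv v y₀ / κ, lt_min hh hr, by linarith,
      hIc.out hj (hxh _ ⟨by linarith [lt_min hh hr], by linarith⟩).1,
      (mul_div_cancel₀ _ hκ.ne').le, fun y hy => hmin ⟨hy.1, by linarith [hy.2]⟩,
      fun y hy => (hxh y ⟨hy.1, by linarith [hy.2]⟩).2.le⟩
  · obtain ⟨y₀, hy₀, hmax⟩ := isCompact_Icc.exists_isMaxOn hne hcont
    obtain ⟨x, hx, hxj, hxgt⟩ := hlarge (κ * deriv v y₀) j hj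
    obtain ⟨h, hh, hxh⟩ := exists_Icc_subset_of_eventually
      ((hI.eventually_mem hx).and ((hv.2.1 x hx).continuousAt.eventually (lt_mem_nhds hxgt)))
    have hηh := min_le_left h (r / 2)
    have hηr := min_le_right h (r / 2)
    refine ⟨x, j + r / 2, min h (r / 2), κ * deriv v y₀, deriv v y₀, lt_min hh (by linarith),
      by linarith, hIc.out hx (hJ ⟨by linarith [lt_min hh (half_pos hr)], by linarith⟩), le_rfl,
      fun y hy => (hxh y ⟨hy.1, by linarith [hy.2]⟩).2.le,
      fun y hy => hmax ⟨by linarith [hy.1], by linarith [hy.2]⟩⟩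

theorem exists_inward_shift_of_inada (hI : IsOpen I) (hIc : I.OrdConnected) (hIne : I.Nonempty)
    (hv : IsUtility I v) (hInada : InadaCondition I v) {K δ : ℝ} (hK : 0 < K) (hδ : 0 < δ) :
    ∃ a a' b' b : ℝ, Icc a b ⊆ I ∧ a < a' ∧ a' < b' ∧ b' < b ∧
      v b - v b' ≤ K * (v a' - v a) ∧ a' - a < δ * (b - b') := by
  obtain ⟨s, t, η, m, M, hη, hst, hsub, hmM, hsteep, hflat⟩ :=
    exists_steep_flat_of_inada hI hIc hIne hv hInada (κ := (1 + δ) / (K * δ)) (by positivity)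
  set ℓ := δ * η / (1 + δ) with hℓ
  have hℓη : ℓ < δ * η := by
    rw [hℓ, div_lt_iff₀ (by positivity)]; nlinarith [mul_pos (mul_pos hδ hη) hδ]
  have hℓlt : ℓ < η := by rw [hℓ, div_lt_iff₀ (by positivity)]; nlinarith
  have hℓpos : 0 < ℓ := by positivity
  have hsteepI : Icc s (s + ℓ) ⊆ I := hsub.trans' (Icc_subset_Icc le_rfl (by linarith))
  have hflatI : Icc t (t + η) ⊆ I := hsub.trans' (Icc_subset_Icc (by linarith) le_rfl)
  have hgain : m * ℓ ≤ v (s + ℓ) - v s := by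
    simpa using (convex_Icc s (s + ℓ)).mul_sub_le_image_sub_of_le_deriv
      (hv.continuousOn.mono hsteepI)
      (fun y hy => (hv.1 y (hsteepI (interior_subset hy))).differentiableWithinAt)
      (fun y hy => hsteep y (Icc_subset_Icc le_rfl (by linarith) (interior_subset hy)))
      s ⟨le_rfl, by linarith⟩ (s + ℓ) ⟨by linarith, le_rfl⟩ (by linarith)
  have hloss : v (t + η) - v t ≤ M * η := by
    simpa using (convex_Icc t (t + η)).image_sub_le_mul_sub_of_deriv_le
      (hv.continuousOn.mono hflatI)
      (fun y hy => (hv.1 y (hflatI (interior_subset hy))).differentiableWithinAt)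
      (fun y hy => hflat y (interior_subset hy))
      t ⟨le_rfl, by linarith⟩ (t + η) ⟨by linarith, le_rfl⟩ (by linarith)
  refine ⟨s, s + ℓ, t, t + η, hsub, by linarith, by linarith, by linarith, ?_, by simpa using hℓη⟩
  calc v (t + η) - v t ≤ M * η := hloss
    _ = K * ((1 + δ) / (K * δ) * M * ℓ) := by rw [hℓ]; field_simp
    _ ≤ K * (m * ℓ) := by gcongr
    _ ≤ K * (v (s + ℓ) - v s) := by gcongr

end Inada

section TwoPoint

open Classical

def twoPoint (B : Set Ω) (x y : ℝ) : Ω → ℝ := B.piecewise (fun _ => x) (fun _ => y)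

variable {B : Set Ω} {x y : ℝ}

omit [MeasurableSpace Ω] in
theorem comp_twoPoint (f : ℝ → ℝ) :
    (fun ω => f (twoPoint B x y ω)) = twoPoint B (f x) (f y) := by
  funext ω
  by_cases hω : ω ∈ B <;> simp [twoPoint, hω]

omit [MeasurableSpace Ω] in
theorem twoPoint_eq_mul_add (a b : ℝ) :
    twoPoint B b a = fun ω => (b - a) * twoPoint B 1 0 ω + a := by
  funext ω
  by_cases hω : ω ∈ B <;> simp [twoPoint, hω]

variable (P : Measure Ω)

theorem memX_twoPoint (hB : MeasurableSet B) (x y : ℝ) : MemX P (twoPoint B x y) := by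
  refine ⟨Measurable.piecewise hB measurable_const measurable_const, |x| + |y|,
    ae_of_all _ fun ω => ?_⟩
  by_cases hω : ω ∈ B <;> simp [twoPoint, hω]

theorem integrable_twoPoint [IsFiniteMeasure P] (hB : MeasurableSet B) (x y : ℝ) :
    Integrable (twoPoint B x y) P :=
  Integrable.piecewise hB integrableOn_const integrableOn_const

theorem memL1_twoPoint [IsFiniteMeasure P] {I : Set ℝ} (v : ℝ → ℝ) (hB : MeasurableSet B)
    (hx : x ∈ I) (hy : y ∈ I) : MemL1 P I v (twoPoint B x y) := by
  refine ⟨(memX_twoPoint P hB x y).1, ae_of_all _ fun ω => ?_, ?_⟩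
  · by_cases hω : ω ∈ B <;> simp [twoPoint, hω, hx, hy]
  · rw [comp_twoPoint]
    exact integrable_twoPoint P hB _ _

theorem integral_twoPoint [IsProbabilityMeasure P] (hB : MeasurableSet B) (x y : ℝ) :
    ∫ ω, twoPoint B x y ω ∂P = P.real B * x + (1 - P.real B) * y := by
  rw [twoPoint, integral_piecewise hB integrableOn_const integrableOn_const,
    setIntegral_const, setIntegral_const, probReal_compl_eq_one_sub hB, smul_eq_mul, smul_eq_mul]

end TwoPoint

theorem memX_const (P : Measure Ω) (c : ℝ) : MemX P (fun _ => c) :=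
  ⟨measurable_const, |c|, ae_of_all _ fun _ => le_rfl⟩

theorem MemX.const_mul {P : Measure Ω} {X : Ω → ℝ} (hX : MemX P X) (t : ℝ) :
    MemX P (fun ω => t * X ω) := by
  obtain ⟨hXm, C, hC⟩ := hX
  exact ⟨hXm.const_mul t, |t| * C, hC.mono fun ω h => by rw [abs_mul]; gcongr⟩

theorem integrable_logSigmoid_comp {P : Measure Ω} [IsFiniteMeasure P] {g : Ω → ℝ}
    (hg : Integrable g P) : Integrable (fun ω => logSigmoid (g ω)) P :=
  Integrable.mono' (hg.abs.add (integrable_const 1))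
    (continuous_logSigmoid.comp_aestronglyMeasurable hg.aestronglyMeasurable)
    (ae_of_all _ fun ω => abs_logSigmoid_le (g ω))

section WorstCase

variable (P : Measure Ω) {X : Ω → ℝ}

theorem rhoW_eq_essSup (X : Ω → ℝ) : rhoW P X = essSup (fun ω => -X ω) P :=
  limsup_eq.symm

theorem ae_neg_le_rhoW (hX : MemX P X) : ∀ᵐ ω ∂P, -X ω ≤ rhoW P X := by
  obtain ⟨C, hC⟩ := hX.2
  rw [rhoW_eq_essSup]
  exact ae_le_essSup (isBoundedUnder_of_eventually_le (a := C)
    (hC.mono fun ω h => (neg_le_abs _).trans h))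

theorem rhoW_le_of_ae_neg_le [NeZero P] (hX : MemX P X) {m : ℝ} (h : ∀ᵐ ω ∂P, -X ω ≤ m) :
    rhoW P X ≤ m := by
  obtain ⟨C, hC⟩ := hX.2
  rw [rhoW_eq_essSup]
  exact essSup_le_of_ae_le m h (isCoboundedUnder_le_of_eventually_le _ (x := -C)
    (hC.mono fun ω h => neg_le_neg ((le_abs_self _).trans h)))

theorem measureReal_pos_of_lt_rhoW [IsFiniteMeasure P] [NeZero P] (hX : MemX P X) {m : ℝ}
    (hm : m < rhoW P X) : 0 < P.real {ω | X ω < -m} := by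
  refine measureReal_nonneg.lt_of_ne' fun h0 => hm.not_ge (rhoW_le_of_ae_neg_le P hX ?_)
  filter_upwards [measure_eq_zero_iff_ae_notMem.1 ((measureReal_eq_zero_iff).1 h0)] with ω hω
  simp only [not_lt] at hω
  linarith

end WorstCase

section RiskMeasure

variable (P : Measure Ω) {ρ : (Ω → ℝ) → ℝ} (hρ : IsRiskMeasure P ρ)
  (hph : IsPositivelyHomogeneous P ρ)
include hρ hph

theorem rho_const (c : ℝ) : ρ (fun _ => c) = -c := by
  have h0 : ρ (fun _ => 0) = 0 := by
    have := hph _ (memX_const P 0) 2 two_pos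
    simp only [mul_zero] at this
    linarith
  simpa [h0] using hρ.2 _ (memX_const P 0) c

theorem rho_le_rhoW {X : Ω → ℝ} (hX : MemX P X) : ρ X ≤ rhoW P X := by
  have h := hρ.1 _ X (memX_const P (-rhoW P X)) hX
    ((ae_neg_le_rhoW P hX).mono fun _ hω => neg_le.1 hω)
  rwa [rho_const P hρ hph, neg_neg] at h

theorem rho_twoPoint {B : Set Ω} (hB : MeasurableSet B) {a b : ℝ} (hab : a < b) :
    ρ (twoPoint B b a) = (b - a) * ρ (twoPoint B 1 0) - a := by
  have hmem := memX_twoPoint P hB 1 0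
  rw [twoPoint_eq_mul_add, hρ.2 _ (hmem.const_mul _), hph _ hmem _ (sub_pos.2 hab)]

end RiskMeasure

section Consistency

variable (P : Measure Ω) [IsProbabilityMeasure P] {I : Set ℝ} {v : ℝ → ℝ}

theorem vSD_twoPoint (hI : IsOpen I) (hIc : I.OrdConnected) (hv : IsUtility I v)
    {B : Set Ω} (hB : MeasurableSet B) {a a' b' b : ℝ} (hab : Icc a b ⊆ I) (h₁ : a < a')
    (h₂ : a' ≤ b') (h₃ : b' < b)
    (hpq : P.real B * (v b - v b') ≤ (1 - P.real B) * (v a' - v a)) :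
    vSD P I v (twoPoint B b a) (twoPoint B b' a') := by
  intro u hu hRA _ _
  rw [comp_twoPoint, comp_twoPoint, integral_twoPoint P hB, integral_twoPoint P hB]
  exact two_point_utility_le hI hIc hv hu hRA hab h₁ h₂ h₃ (sub_nonneg.2 measureReal_le_one) hpq

variable {ρ : (Ω → ℝ) → ℝ}

theorem rho_twoPoint_one_zero_nonneg (hI : IsOpen I) (hIc : I.OrdConnected) (hIne : I.Nonempty)
    (hv : IsUtility I v) (hInada : InadaCondition I v) (hρ : IsRiskMeasure P ρ)
    (hph : IsPositivelyHomogeneous P ρ) (hcons : VSDConsistent P I v {X | MemX P X} ρ)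
    {B : Set Ω} (hB : MeasurableSet B) (hB1 : P.real B < 1) : 0 ≤ ρ (twoPoint B 1 0) := by
  rcases measureReal_nonneg.eq_or_lt with hB0 | hB0
  · have h := hρ.1 _ _ (memX_twoPoint P hB 1 0) (memX_const P 0)
      ((measure_eq_zero_iff_ae_notMem.1 ((measureReal_eq_zero_iff).1 hB0.symm)).mono
        fun ω hω => by simp [twoPoint, hω])
    rwa [rho_const P hρ hph, neg_zero] at h
  by_contra! hneg
  obtain ⟨a, a', b', b, hab, h₁, h₂, h₃, hvab, hshift⟩ :=
    exists_inward_shift_of_inada hI hIc hIne hv hInada (K := (1 - P.real B) / P.real B)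
      (div_pos (sub_pos.2 hB1) hB0) (neg_pos.2 hneg)
  have hpq : P.real B * (v b - v b') ≤ (1 - P.real B) * (v a' - v a) := by
    calc P.real B * (v b - v b') ≤ P.real B * ((1 - P.real B) / P.real B * (v a' - v a)) := by
          gcongr
      _ = (1 - P.real B) * (v a' - v a) := by field_simp
  have hcmp := hcons _ _ (memX_twoPoint P hB b a) (memX_twoPoint P hB b' a')
    (memL1_twoPoint P v hB (hab ⟨by linarith, le_rfl⟩) (hab ⟨le_rfl, by linarith⟩))
    (memL1_twoPoint P v hB (hab ⟨by linarith, h₃.le⟩) (hab ⟨h₁.le, by linarith⟩))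
    (vSD_twoPoint P hI hIc hv hB hab h₁ h₂.le h₃ hpq)
  rw [rho_twoPoint P hρ hph hB h₂, rho_twoPoint P hρ hph hB (h₁.trans (h₂.trans h₃))] at hcmp
  nlinarith [mul_pos (neg_pos.2 hneg) (sub_pos.2 h₁)]

theorem rhoW_le_rho (hI : IsOpen I) (hIc : I.OrdConnected) (hIne : I.Nonempty)
    (hv : IsUtility I v) (hInada : InadaCondition I v) (hρ : IsRiskMeasure P ρ)
    (hph : IsPositivelyHomogeneous P ρ) (hcons : VSDConsistent P I v {X | MemX P X} ρ)
    {X : Ω → ℝ} (hX : MemX P X) : rhoW P X ≤ ρ X := by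
  refine le_of_forall_lt_imp_le_of_dense fun m hm => ?_
  have hA : MeasurableSet {ω | X ω < -m} := measurableSet_lt hX.1 measurable_const
  obtain ⟨C, hC⟩ := hX.2
  have ht : 0 < |C| + |m| + 1 := by positivity
  have hXZ : ∀ᵐ ω ∂P, X ω ≤ twoPoint {ω | X ω < -m}ᶜ (-m + (|C| + |m| + 1)) (-m) ω := by
    filter_upwards [hC] with ω hω
    by_cases h : X ω < -m
    · simp [twoPoint, h, h.le]
    · simp [twoPoint, h]
      linarith [le_abs_self (X ω), le_abs_self C, le_abs_self m]
  have hZX := hρ.1 X _ hX (memX_twoPoint P hA.compl _ _) hXZ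
  have hZ := rho_twoPoint_one_zero_nonneg P hI hIc hIne hv hInada hρ hph hcons hA.compl
    (by linarith [probReal_add_probReal_compl (μ := P) hA, measureReal_pos_of_lt_rhoW P hX hm])
  rw [rho_twoPoint P hρ hph hA.compl (by linarith)] at hZX
  nlinarith

theorem neg_one_le_integral_logSigmoid_comp (hI : IsOpen I) (hIc : I.OrdConnected)
    (hv : IsUtility I v) {X : Ω → ℝ} (hXv : MemL1 P I v X) {b k : ℝ} (hb : b ∈ I) (hk : 0 ≤ k)
    (hXb : ∀ᵐ ω ∂P, b ≤ X ω) : -1 ≤ ∫ ω, logSigmoid (k * (v (X ω) - v b)) ∂P := by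
  have h : ∀ᵐ ω ∂P, -1 ≤ logSigmoid (k * (v (X ω) - v b)) := by
    filter_upwards [hXv.2.1, hXb] with ω hωI hωb
    exact neg_one_le_logSigmoid
      (mul_nonneg hk (sub_nonneg.2 ((hv.strictMonoOn hI hIc).monotoneOn hb hωI hωb)))
  simpa using integral_mono_ae (integrable_const (-1))
    (integrable_logSigmoid_comp ((hXv.2.2.sub (integrable_const _)).const_mul k)) h

theorem integral_logSigmoid_comp_le (hI : IsOpen I) (hIc : I.OrdConnected)
    (hv : IsUtility I v) {Y : Ω → ℝ} (hYv : MemL1 P I v Y) {b c k : ℝ} (hc : c ∈ I)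
    (hk : 0 ≤ k) :
    ∫ ω, logSigmoid (k * (v (Y ω) - v b)) ∂P ≤
      -(k * (v b - v c)) * P.real {ω | Y ω < c} := by
  have hA : MeasurableSet {ω | Y ω < c} := measurableSet_lt hYv.1 measurable_const
  have h : ∀ᵐ ω ∂P, logSigmoid (k * (v (Y ω) - v b)) ≤
      {ω | Y ω < c}.indicator (fun _ => -(k * (v b - v c))) ω := by
    filter_upwards [hYv.2.1] with ω hωI
    by_cases hωc : Y ω < c
    · rw [indicator_of_mem (show ω ∈ {ω | Y ω < c} from hωc)]
      calc logSigmoid (k * (v (Y ω) - v b)) ≤ k * (v (Y ω) - v b) := logSigmoid_le_self _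
        _ ≤ -(k * (v b - v c)) := by
          nlinarith [mul_le_mul_of_nonneg_left (hv.strictMonoOn hI hIc hωI hc hωc).le hk]
    · rw [indicator_of_notMem (show ω ∉ {ω | Y ω < c} from hωc)]
      exact logSigmoid_nonpos _
  calc ∫ ω, logSigmoid (k * (v (Y ω) - v b)) ∂P
      ≤ ∫ ω, {ω | Y ω < c}.indicator (fun _ => -(k * (v b - v c))) ω ∂P :=
        integral_mono_ae (integrable_logSigmoid_comp
          ((hYv.2.2.sub (integrable_const _)).const_mul k)) ((integrable_const _).indicator hA) h
    _ = -(k * (v b - v c)) * P.real {ω | Y ω < c} := by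
        rw [integral_indicator_const _ hA, smul_eq_mul, mul_comm]

theorem rhoW_le_rhoW_of_vSD (hI : IsOpen I) (hIc : I.OrdConnected) (hv : IsUtility I v)
    {X Y : Ω → ℝ} (hX : MemX P X) (hY : MemX P Y) (hXv : MemL1 P I v X) (hYv : MemL1 P I v Y)
    (hXY : vSD P I v X Y) : rhoW P Y ≤ rhoW P X := by
  by_contra! hlt
  set b := -rhoW P X with hb
  set c := -((rhoW P X + rhoW P Y) / 2) with hc
  have hXb : ∀ᵐ ω ∂P, b ≤ X ω := (ae_neg_le_rhoW P hX).mono fun ω h => by linarith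
  have hp : 0 < P.real {ω | Y ω < c} := measureReal_pos_of_lt_rhoW P hY (by linarith)
  obtain ⟨ω₀, hX₀I, hX₀b⟩ := (hXv.2.1.and hXb).exists
  obtain ⟨ω₁, hY₁c, hY₁I⟩ : ∃ ω, Y ω < c ∧ Y ω ∈ I := ((frequently_ae_mem_iff.2
    ((measureReal_ne_zero_iff).1 hp.ne')).and_eventually hYv.2.1).exists
  have hbI : b ∈ I := hIc.out hY₁I hX₀I ⟨by linarith, hX₀b⟩
  have hcI : c ∈ I := hIc.out hY₁I hX₀I ⟨hY₁c.le, by linarith⟩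
  have hD : 0 < v b - v c := sub_pos.2 (hv.strictMonoOn hI hIc hcI hbI (by linarith))
  set k := 2 / ((v b - v c) * P.real {ω | Y ω < c}) with hk
  have hk_pos : 0 < k := by positivity
  have hkD : k * (v b - v c) * P.real {ω | Y ω < c} = 2 := by rw [hk]; field_simp
  obtain ⟨hu, hRA⟩ := hv.logSigmoid_comp hI hk_pos (v b)
  have hint : ∀ Z, MemL1 P I v Z → Integrable (fun ω => logSigmoid (k * (v (Z ω) - v b))) P :=
    fun Z hZ => integrable_logSigmoid_comp ((hZ.2.2.sub (integrable_const _)).const_mul k)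
  linarith [hXY _ hu hRA (hint X hXv) (hint Y hYv),
    neg_one_le_integral_logSigmoid_comp P hI hIc hv hXv hbI hk_pos.le hXb,
    integral_logSigmoid_comp_le P hI hIc hv hYv (b := b) hcI hk_pos.le]

end Consistency

theorem statement14_general (P : Measure Ω) [IsProbabilityMeasure P]
    (I : Set ℝ) (hIopen : IsOpen I) (hIconn : I.OrdConnected) (hIne : I.Nonempty)
    (v : ℝ → ℝ) (hv : IsUtility I v)
    (hInada : (∀ ε : ℝ, 0 < ε → ∀ b ∈ I, ∃ x ∈ I, b ≤ x ∧ deriv v x < ε) ∨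
      (∀ M : ℝ, ∀ b ∈ I, ∃ x ∈ I, x ≤ b ∧ M < deriv v x))
    (ρ : (Ω → ℝ) → ℝ) (hρ : IsRiskMeasure P ρ)
    (hph : ∀ X : Ω → ℝ, MemX P X → ∀ t : ℝ, 0 < t →
      ρ (fun ω => t * X ω) = t * ρ X) :
    VSDConsistent P I v {X | MemX P X} ρ ↔
      (∀ X : Ω → ℝ, MemX P X → ρ X = rhoW P X) := by
  constructor
  · intro hcons X hX
    exact le_antisymm (rho_le_rhoW P hρ hph hX)
      (rhoW_le_rho P hIopen hIconn hIne hv hInada hρ hph hcons hX)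
  · intro hρW X Y hX hY hXv hYv hXY
    rw [hρW X hX, hρW Y hY]
    exact rhoW_le_rhoW_of_vSD P hIopen hIconn hv hX hY hXv hYv hXY

/-- If the threshold utility `v ∈ 𝒰(I)` satisfies the
Inada-type condition `liminf_{x ↑ sup I} v′(x) = 0` or
`limsup_{x ↓ inf I} v′(x) = ∞` (expressed via the frequently-quantifiers below),
then a positively homogeneous monetary risk measure `ρ` on `𝒳` is
`v`-SD-consistent iff it is the worst-case risk measure. -/
theorem statement14 (P : Measure Ω) [IsProbabilityMeasure P] (hP : Atomless P)
    (I : Set ℝ) (hIopen : IsOpen I) (hIconn : I.OrdConnected) (hIne : I.Nonempty)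
    (v : ℝ → ℝ) (hv : IsUtility I v)
    (hInada : (∀ ε : ℝ, 0 < ε → ∀ b ∈ I, ∃ x ∈ I, b ≤ x ∧ deriv v x < ε) ∨
      (∀ M : ℝ, ∀ b ∈ I, ∃ x ∈ I, x ≤ b ∧ M < deriv v x))
    (ρ : (Ω → ℝ) → ℝ) (hρ : IsRiskMeasure P ρ)
    (hph : ∀ X : Ω → ℝ, MemX P X → ∀ t : ℝ, 0 < t →
      ρ (fun ω => t * X ω) = t * ρ X) :
    VSDConsistent P I v {X | MemX P X} ρ ↔
      (∀ X : Ω → ℝ, MemX P X → ρ X = rhoW P X) :=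
  statement14_general P I hIopen hIconn hIne v hv hInada ρ hρ hph

end Paper
end
end
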